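/- The β-β bound with Q_Y = P_Y recovers a weakened dependence-testing bound: for every ε ∈ (0,1) and input distribution P_X, there exists an (M,ε) average-error code whenever ε ≥ inf_{α ∈ (0,1)} { 1 − α + (M/2) β_α(P_{XY}, P_X × P_Y) }. -/

import Mathlib

open MeasureTheory

noncomputable def beta {W : Type*} [MeasurableSpace W] (α : ℝ) (P Q : MeasureTheory.Measure W) : ℝ :=
  sInf {b : ℝ | ∃ T : W → ℝ, Measurable T ∧ (∀ w, T w ∈ Set.Icc (0:ℝ) 1) ∧
    α ≤ ∫ w, T w ∂P ∧ b = ∫ w, T w ∂Q}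

/-- Average error probability of the code `(f, g)` over the channel `κ`
(`g y = none` represents the error symbol `e`). -/
noncomputable def avgError {A B : Type*} [MeasurableSpace A] [MeasurableSpace B]
    (κ : ProbabilityTheory.Kernel A B) (M : ℕ) (f : Fin M → A)
    (g : B → Option (Fin M)) : ℝ :=
  (1 / (M : ℝ)) * ∑ j : Fin M, (1 - (κ (f j) {y | g y = some j}).toReal)

instance {M : ℕ} : MeasurableSpace (Fin M) := ⊤
instance {M : ℕ} : MeasurableSpace (Option (Fin M)) := ⊤

/-!
A Hahn set `S` of the signed measure `P_{XY} - (M/2) (P_X × P_Y)` does at least as well as every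
randomized test `T`, i.e. `∫ T dP_{XY} - (M/2) ∫ T d(P_X × P_Y) ≤ P_{XY}(S) - (M/2) (P_X × P_Y)(S)`.
Hence `1 - P_{XY}(S) + (M/2) (P_X × P_Y)(S) ≤ 1 - α + (M/2) β_α` for every `α`, so it is `≤ ε`.

Now draw the codewords `x_1, …, x_M` i.i.d. from `P_X` and decode `y` to the first `j` with
`(x_j, y) ∈ S`. Message `j` is decoded wrongly only if `(x_j, y) ∉ S` or `(x_i, y) ∈ S` for some
`i < j`; since `x_i` is independent of the pair `(x_j, y)`, the latter has probability
`(P_X × P_Y)(S)`. Summing these union bounds, the expected average error is at most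
`1 - P_{XY}(S) + ((M-1)/2) (P_X × P_Y)(S)`, and some codebook does no worse than the average.
-/

open ProbabilityTheory

section Derandomization

variable {W : Type*} [MeasurableSpace W]

lemma integrable_of_mem_Icc (μ : Measure W) [IsFiniteMeasure μ] {T : W → ℝ}
    (hT : Measurable T) (hT01 : ∀ w, T w ∈ Set.Icc (0 : ℝ) 1) : Integrable T μ :=
  Integrable.of_bound hT.aestronglyMeasurable 1 (ae_of_all _ fun w => by
    rw [Real.norm_eq_abs, abs_of_nonneg (hT01 w).1]; exact (hT01 w).2)

theorem exists_measurableSet_integral_sub_integral_le (μ ν : Measure W) [IsFiniteMeasure μ]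
    [IsFiniteMeasure ν] :
    ∃ s, MeasurableSet s ∧ ∀ T : W → ℝ, Measurable T → (∀ w, T w ∈ Set.Icc (0 : ℝ) 1) →
      ∫ w, T w ∂μ - ∫ w, T w ∂ν ≤ μ.real s - ν.real s := by
  obtain ⟨s, hs, hνμ, hμν⟩ := hahn_decomposition μ ν
  refine ⟨s, hs, fun T hT hT01 => ?_⟩
  have hs_le : ν.restrict s ≤ μ.restrict s := Measure.le_iff.2 fun t ht => by
    simpa only [Measure.restrict_apply ht] using hνμ _ (ht.inter hs) Set.inter_subset_right
  have hsc_le : μ.restrict sᶜ ≤ ν.restrict sᶜ := Measure.le_iff.2 fun t ht => by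
    simpa only [Measure.restrict_apply ht] using
      hμν _ (ht.inter hs.compl) Set.inter_subset_right
  have h_on_s : ∫ w in s, (1 - T w) ∂ν ≤ ∫ w in s, (1 - T w) ∂μ :=
    integral_mono_measure hs_le (ae_of_all _ fun w => sub_nonneg.2 (hT01 w).2)
      ((integrable_const 1).sub (integrable_of_mem_Icc _ hT hT01))
  have h_on_sc : ∫ w in sᶜ, T w ∂μ ≤ ∫ w in sᶜ, T w ∂ν :=
    integral_mono_measure hsc_le (ae_of_all _ fun w => (hT01 w).1)
      (integrable_of_mem_Icc _ hT hT01)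
  rw [integral_sub (integrable_const 1) (integrable_of_mem_Icc _ hT hT01),
    integral_sub (integrable_const 1) (integrable_of_mem_Icc _ hT hT01),
    setIntegral_const, setIntegral_const] at h_on_s
  rw [← integral_add_compl hs (integrable_of_mem_Icc μ hT hT01),
    ← integral_add_compl hs (integrable_of_mem_Icc ν hT hT01)]
  simp only [smul_eq_mul, mul_one] at h_on_s
  linarith

theorem exists_measurableSet_integral_sub_mul_integral_le (P Q : Measure W)
    [IsFiniteMeasure P] [IsFiniteMeasure Q] {c : ℝ} (hc : 0 ≤ c) :
    ∃ s, MeasurableSet s ∧ ∀ T : W → ℝ, Measurable T → (∀ w, T w ∈ Set.Icc (0 : ℝ) 1) →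
      ∫ w, T w ∂P - c * ∫ w, T w ∂Q ≤ P.real s - c * Q.real s := by
  have : IsFiniteMeasure (ENNReal.ofReal c • Q) := Measure.smul_finite Q ENNReal.ofReal_ne_top
  obtain ⟨s, hs, h⟩ := exists_measurableSet_integral_sub_integral_le P (ENNReal.ofReal c • Q)
  refine ⟨s, hs, fun T hT hT01 => ?_⟩
  simpa [integral_smul_measure, ENNReal.toReal_ofReal hc] using h T hT hT01

lemma sub_measureReal_add_mul_le_mul_beta {P Q : Measure W} [IsProbabilityMeasure P]
    {c α : ℝ} (hc : 0 ≤ c) (hα : α ≤ 1) {s : Set W}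
    (hs : ∀ T : W → ℝ, Measurable T → (∀ w, T w ∈ Set.Icc (0 : ℝ) 1) →
      ∫ w, T w ∂P - c * ∫ w, T w ∂Q ≤ P.real s - c * Q.real s) :
    α - P.real s + c * Q.real s ≤ c * beta α P Q := by
  have hne : {b : ℝ | ∃ T : W → ℝ, Measurable T ∧ (∀ w, T w ∈ Set.Icc (0:ℝ) 1) ∧
      α ≤ ∫ w, T w ∂P ∧ b = ∫ w, T w ∂Q}.Nonempty :=
    ⟨_, fun _ => 1, measurable_const, fun _ => ⟨zero_le_one, le_rfl⟩, by simpa using hα, rfl⟩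
  refine (le_csInf hne.smul_set ?_).trans_eq (Real.sInf_smul_of_nonneg hc _)
  rintro _ ⟨b, ⟨T, hT, hT01, hαT, rfl⟩, rfl⟩
  have := hs T hT hT01
  simp only [smul_eq_mul]
  linarith

end Derandomization

lemma measurePreserving_pi_pair {ι α : Type*} [Fintype ι] [MeasurableSpace α]
    (μ : Measure α) [IsProbabilityMeasure μ] {i j : ι} (hij : i ≠ j) :
    MeasurePreserving (fun x : ι → α => (x i, x j)) (Measure.pi fun _ => μ) (μ.prod μ) := by
  refine ⟨(measurable_pi_apply i).prodMk (measurable_pi_apply j), ?_⟩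
  have hind : IndepFun (fun x : ι → α => x i) (fun x => x j) (Measure.pi fun _ => μ) :=
    (iIndepFun_pi (X := fun _ => id) fun _ => aemeasurable_id).indepFun hij
  rw [indepFun_iff_map_prod_eq_prod_map_map (measurable_pi_apply i).aemeasurable
    (measurable_pi_apply j).aemeasurable] at hind
  simpa [(measurePreserving_eval _ i).map_eq, (measurePreserving_eval _ j).map_eq] using hind

section ThresholdDecoder

variable {A B : Type*} {M : ℕ}

open Classical in
noncomputable def thresholdDecoder (S : Set (A × B)) (x : Fin M → A) (y : B) : Option (Fin M) :=
  Fin.find? fun j => decide ((x j, y) ∈ S)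

variable {S : Set (A × B)} {x : Fin M → A}

lemma thresholdDecoder_eq_some_iff {y : B} {j : Fin M} :
    thresholdDecoder S x y = some j ↔ (x j, y) ∈ S ∧ ∀ i < j, (x i, y) ∉ S := by
  simp [thresholdDecoder]

lemma setOf_thresholdDecoder_ne_subset (j : Fin M) :
    {y | thresholdDecoder S x y ≠ some j} ⊆
      (Prod.mk (x j) ⁻¹' S)ᶜ ∪ ⋃ i ∈ Finset.Iio j, Prod.mk (x i) ⁻¹' S := by
  intro y hy
  by_contra h
  simp only [Set.mem_union, Set.mem_compl_iff, Set.mem_preimage, Set.mem_iUnion, Finset.mem_Iio,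
    not_or, not_not, not_exists] at h
  exact hy (thresholdDecoder_eq_some_iff.2 h)

lemma measurable_thresholdDecoder [MeasurableSpace A] [MeasurableSpace B]
    (hS : MeasurableSet S) : Measurable (thresholdDecoder S x) := by
  refine (measurable_of_countable (Fin.find? (n := M))).comp (measurable_pi_lambda _ fun j => ?_)
  refine measurable_to_bool ?_
  convert measurable_prodMk_left (x := x j) hS using 1
  ext y
  simp

end ThresholdDecoder

section Expectations

variable {A B ι : Type*} [MeasurableSpace A] [MeasurableSpace B] [Fintype ι]
  (κ : Kernel A B) [IsSFiniteKernel κ] (PX : Measure A) [IsProbabilityMeasure PX]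
  {S : Set (A × B)}

lemma measurable_kernel_apply_prodMk_preimage (hS : MeasurableSet S) :
    Measurable fun p : A × A => κ p.2 (Prod.mk p.1 ⁻¹' S) :=
  Kernel.measurable_kernel_prodMk_left (κ := κ.comap Prod.snd measurable_snd)
    (((measurable_fst.comp measurable_fst).prodMk measurable_snd) hS)

lemma lintegral_pi_kernel_diag (hS : MeasurableSet S) (j : ι) :
    ∫⁻ x, κ (x j) (Prod.mk (x j) ⁻¹' S) ∂(Measure.pi fun _ : ι => PX) = PX.compProd κ S := by
  rw [(measurePreserving_eval (fun _ => PX) j).lintegral_comp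
    (Kernel.measurable_kernel_prodMk_left hS), Measure.compProd_apply hS]

lemma lintegral_pi_kernel_offdiag (hS : MeasurableSet S) {i j : ι} (hij : i ≠ j) :
    ∫⁻ x, κ (x j) (Prod.mk (x i) ⁻¹' S) ∂(Measure.pi fun _ : ι => PX)
      = PX.prod (PX.bind κ) S := by
  have hm := measurable_kernel_apply_prodMk_preimage κ hS
  rw [(measurePreserving_pi_pair PX hij).lintegral_comp hm, lintegral_prod _ hm.aemeasurable,
    Measure.prod_apply hS]
  exact lintegral_congr fun a =>
    (Measure.bind_apply (measurable_prodMk_left hS) κ.aemeasurable).symm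

end Expectations

lemma Fin.sum_val_eq_choose_two (n : ℕ) : ∑ j : Fin n, (j : ℕ) = n.choose 2 := by
  rw [Fin.sum_univ_eq_sum_range (fun j => j) n, Finset.sum_range_id, Nat.choose_two_right]

section RandomCoding

variable {A B : Type*} [MeasurableSpace A] [MeasurableSpace B] {M : ℕ}
  (κ : Kernel A B) (PX : Measure A) [IsProbabilityMeasure PX] {S : Set (A × B)}

noncomputable def unionBound (S : Set (A × B)) (x : Fin M → A) (j : Fin M) : ENNReal :=
  κ (x j) (Prod.mk (x j) ⁻¹' Sᶜ) + ∑ i ∈ Finset.Iio j, κ (x j) (Prod.mk (x i) ⁻¹' S)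

lemma kernel_thresholdDecoder_ne_le_unionBound (x : Fin M → A) (j : Fin M) :
    κ (x j) {y | thresholdDecoder S x y ≠ some j} ≤ unionBound κ S x j :=
  (measure_mono (setOf_thresholdDecoder_ne_subset j)).trans
    ((measure_union_le _ _).trans (add_le_add le_rfl (measure_biUnion_finset_le _ _)))

variable [IsSFiniteKernel κ]

lemma measurable_pi_kernel_apply_prodMk_preimage {T : Set (A × B)} (hT : MeasurableSet T)
    (i j : Fin M) : Measurable fun x : Fin M → A => κ (x j) (Prod.mk (x i) ⁻¹' T) :=
  (measurable_kernel_apply_prodMk_preimage κ hT).comp (f := fun x : Fin M → A => (x i, x j))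
    ((measurable_pi_apply i).prodMk (measurable_pi_apply j))

lemma measurable_unionBound (hS : MeasurableSet S) (j : Fin M) :
    Measurable fun x => unionBound κ S x j :=
  (measurable_pi_kernel_apply_prodMk_preimage κ hS.compl j j).add
    (Finset.measurable_sum _ fun i _ => measurable_pi_kernel_apply_prodMk_preimage κ hS i j)

lemma lintegral_unionBound (hS : MeasurableSet S) (j : Fin M) :
    ∫⁻ x, unionBound κ S x j ∂(Measure.pi fun _ => PX)
      = PX.compProd κ Sᶜ + (j : ℕ) * PX.prod (PX.bind κ) S := by
  simp only [unionBound]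
  rw [lintegral_add_left (measurable_pi_kernel_apply_prodMk_preimage κ hS.compl j j),
    lintegral_finsetSum _ fun i _ => measurable_pi_kernel_apply_prodMk_preimage κ hS i j,
    lintegral_pi_kernel_diag κ PX hS.compl j, Finset.sum_congr rfl fun i hi =>
      lintegral_pi_kernel_offdiag κ PX hS (Finset.mem_Iio.1 hi).ne,
    Finset.sum_const, Fin.card_Iio, nsmul_eq_mul]

lemma lintegral_sum_unionBound (hS : MeasurableSet S) :
    ∫⁻ x, ∑ j, unionBound κ S x j ∂(Measure.pi fun _ : Fin M => PX)
      = M * PX.compProd κ Sᶜ + M.choose 2 * PX.prod (PX.bind κ) S := by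
  rw [lintegral_finsetSum _ fun j _ => measurable_unionBound κ hS j,
    Finset.sum_congr rfl fun j _ => lintegral_unionBound κ PX hS j, Finset.sum_add_distrib,
    ← Finset.sum_mul, ← Nat.cast_sum, Fin.sum_val_eq_choose_two]
  simp

end RandomCoding

section Code

variable {A B : Type*} [MeasurableSpace A] [MeasurableSpace B] {M : ℕ}
  (κ : Kernel A B) [IsMarkovKernel κ]

lemma avgError_eq_toReal_sum_div {f : Fin M → A} {g : B → Option (Fin M)}
    (hg : Measurable g) : avgError κ M f g = (∑ j, κ (f j) {y | g y ≠ some j}).toReal / M := by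
  rw [avgError, ENNReal.toReal_sum fun j _ => measure_ne_top _ _, one_div_mul_eq_div]
  congr 1
  refine Finset.sum_congr rfl fun j _ => ?_
  exact (probReal_compl_eq_one_sub (hg (measurableSet_singleton (some j)))).symm

theorem exists_code_avgError_le (PX : Measure A) [IsProbabilityMeasure PX] {S : Set (A × B)}
    (hS : MeasurableSet S) (hM : 0 < M) :
    ∃ f : Fin M → A, ∃ g : B → Option (Fin M), Measurable g ∧
      avgError κ M f g ≤
        1 - (PX.compProd κ).real S + ((M - 1) / 2) * (PX.prod (PX.bind κ)).real S := by
  obtain ⟨x, hx⟩ := exists_le_lintegral (μ := Measure.pi fun _ : Fin M => PX)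
    (Finset.measurable_sum _ fun j _ => measurable_unionBound κ hS j).aemeasurable
  refine ⟨x, thresholdDecoder S x, measurable_thresholdDecoder hS, ?_⟩
  have herr := ((Finset.sum_le_sum fun j _ =>
    kernel_thresholdDecoder_ne_le_unionBound κ x j).trans hx).trans_eq
    (lintegral_sum_unionBound κ PX hS)
  have hfin : (M : ENNReal) * PX.compProd κ Sᶜ + M.choose 2 * PX.prod (PX.bind κ) S ≠ ⊤ := by
    finiteness
  have hreal := ENNReal.toReal_mono hfin herr
  rw [ENNReal.toReal_add (by finiteness) (by finiteness), ENNReal.toReal_mul, ENNReal.toReal_mul,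
    ENNReal.toReal_natCast, ENNReal.toReal_natCast, ← measureReal_def, ← measureReal_def,
    probReal_compl_eq_one_sub hS, Nat.cast_choose_two] at hreal
  rw [avgError_eq_toReal_sum_div κ (measurable_thresholdDecoder hS), div_le_iff₀ (by positivity)]
  linarith

end Code

theorem weakened_dt_bound_general {A B : Type*} [MeasurableSpace A] [MeasurableSpace B]
    (κ : ProbabilityTheory.Kernel A B) [ProbabilityTheory.IsMarkovKernel κ]
    (ε : ℝ)
    (PX : Measure A) [IsProbabilityMeasure PX]
    (M : ℕ) (hM : 0 < M)
    (hεge : sInf {x : ℝ | ∃ α ∈ Set.Ioo (0 : ℝ) 1,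
        x = 1 - α + ((M : ℝ) / 2) * beta α (PX.compProd κ) (PX.prod (PX.bind κ))} ≤ ε) :
    ∃ f : Fin M → A, ∃ g : B → Option (Fin M), Measurable g ∧ avgError κ M f g ≤ ε := by
  obtain ⟨S, hS, hS_opt⟩ := exists_measurableSet_integral_sub_mul_integral_le
    (PX.compProd κ) (PX.prod (PX.bind κ)) (c := M / 2) (by positivity)
  have hS_le : 1 - (PX.compProd κ).real S + (M / 2) * (PX.prod (PX.bind κ)).real S ≤ ε := by
    refine hεge.trans' (le_csInf ⟨_, 1 / 2, by norm_num, rfl⟩ ?_)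
    rintro _ ⟨α, hα, rfl⟩
    linarith [sub_measureReal_add_mul_le_mul_beta (by positivity) hα.2.le hS_opt]
  obtain ⟨f, g, hg, hfg⟩ := exists_code_avgError_le κ PX hS hM
  refine ⟨f, g, hg, hfg.trans (le_trans ?_ hS_le)⟩
  gcongr
  linarith

/-- The β-β bound with `Q_Y = P_Y` recovers a weakened dependence-testing bound. -/
theorem weakened_dt_bound {A B : Type*} [MeasurableSpace A] [MeasurableSpace B]
    (κ : ProbabilityTheory.Kernel A B) [ProbabilityTheory.IsMarkovKernel κ]
    (ε : ℝ) (hε : ε ∈ Set.Ioo (0 : ℝ) 1)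
    (PX : Measure A) [IsProbabilityMeasure PX]
    (M : ℕ) (hM : 0 < M)
    (hεge : sInf {x : ℝ | ∃ α ∈ Set.Ioo (0 : ℝ) 1,
        x = 1 - α + ((M : ℝ) / 2) * beta α (PX.compProd κ) (PX.prod (PX.bind κ))} ≤ ε) :
    ∃ f : Fin M → A, ∃ g : B → Option (Fin M), Measurable g ∧ avgError κ M f g ≤ ε :=
  weakened_dt_bound_general κ ε PX M hM hεge
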